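/- Let Γ be a rooted tree with positive edge lengths t, let e be a non-hanging edge of Γ, and let b be a hanging edge that is a proper descendant of e. Set l = up(b) \ ({b} ∪ up(e)) (the edges strictly between b and e on the path from b to the root) and D = the set of proper descendants of e other than b. Let Γ' be the rooted tree obtained from Γ by the transformation T1: delete e (attaching the subtrees below e's lower endpoint directly to e's upper endpoint) and re-insert e between the hanging edge b and its parent vertex, keeping all edge lengths. Then 2·P₂(Γ, t) − 2·P₂(Γ', t) = t_e · Σ_{f ∈ D \ l} t_f. -/

import Mathlib

/-- A rooted tree with edge set `E`, encoded by its parent-edge function: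
`par e = some f` if `f` is the next edge on the simple path from `e` towards the
root, and `par e = none` if `e` is incident to the root.  Acyclicity (hence, for
a finite edge set, that we really get a tree with vertex set `E ⊕ {root}`) is
guaranteed by a rank function decreasing along `par`. -/
structure EdgeRootedTree (E : Type*) where
  par : E → Option E
  wf : ∃ rank : E → ℕ, ∀ a b, par a = some b → rank b < rank a

namespace EdgeRootedTree

variable {E : Type*}

/-- `Γ.inUp e f` : the edge `f` lies on the simple path from `e` to the root
(`f` is an ancestor of `e`, or `f = e`). -/
def inUp (Γ : EdgeRootedTree E) (e f : E) : Prop :=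
  Relation.ReflTransGen (fun a b => Γ.par a = some b) e f

open scoped Classical in
/-- `up(e)` : the set of edges of the simple path from `e` to the root, `e` included. -/
noncomputable def up (Γ : EdgeRootedTree E) [Fintype E] (e : E) : Finset E :=
  Finset.univ.filter (Γ.inUp e)

/-- An edge is hanging if its lower endpoint is a leaf distinct from the root,
i.e. if it has no child edge. -/
def IsHanging (Γ : EdgeRootedTree E) (e : E) : Prop :=
  ∀ f, Γ.par f ≠ some e

open scoped Classical in
/-- The set `H` of hanging edges. -/
noncomputable def hanging (Γ : EdgeRootedTree E) [Fintype E] : Finset E :=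
  Finset.univ.filter Γ.IsHanging

/-- The second asymptotic coefficient polynomial `P₂`, defined by
`2 P₂ = -(Σ_E t)² - Σ_E t² - Σ_H t² + 2 (Σ_H t)(Σ_E t) + Σ_{e∈E} Σ_{f∈up(e)} t_e t_f`. -/
noncomputable def P2 [Fintype E] (Γ : EdgeRootedTree E) (t : E → ℝ) : ℝ :=
  (-(∑ e, t e) ^ 2 - ∑ e, t e ^ 2 - ∑ e ∈ Γ.hanging, t e ^ 2
      + 2 * (∑ e ∈ Γ.hanging, t e) * (∑ e, t e)
      + ∑ e, ∑ f ∈ Γ.up e, t e * t f) / 2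

end EdgeRootedTree

namespace EdgeRootedTree

variable {E : Type*}

open scoped Classical in
/-- The parent function of the tree obtained from `Γ` by the transformation **T1**:
the edge `e` is deleted (the subtrees below the lower endpoint of `e` are attached
directly to the upper endpoint of `e`) and re-inserted between the hanging edge `b`
and its parent vertex. -/
noncomputable def T1par (Γ : EdgeRootedTree E) (e b : E) : E → Option E := fun f =>
  if f = b then some e
  else if f = e then (if Γ.par b = some e then Γ.par e else Γ.par b)
  else if Γ.par f = some e then Γ.par e
  else Γ.par f

end EdgeRootedTree

/-!
T1 does not change the set of hanging edges, so only the double sum `Σ_f Σ_{g ∈ up f} t_f t_g`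
in `2 P₂` changes. Comparing ancestor sets: every proper descendant `f ≠ b` of `e` loses the
ancestor `e`, the edge `e` gains the edges `l` strictly between `b` and `e`, and all other
ancestor sets (that of `b` included) stay the same. As `l ⊆ D`, the difference is
`t_e (Σ_D t - Σ_l t) = t_e Σ_{D \ l} t`.
-/

namespace EdgeRootedTree

variable {E : Type*}

section Tree

variable (Γ : EdgeRootedTree E)

theorem inUp_iff {f h : E} : Γ.inUp f h ↔ f = h ∨ ∃ c ∈ Γ.par f, Γ.inUp c h :=
  Relation.ReflTransGen.cases_head_iff

theorem inUp_iff_of_par_eq_some {f c : E} (hc : Γ.par f = some c) (h : E) :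
    Γ.inUp f h ↔ f = h ∨ Γ.inUp c h := by
  rw [Γ.inUp_iff, hc]
  simp only [Option.mem_def, Option.some_inj, exists_eq_left']

theorem par_induction {P : E → Prop} (step : ∀ f, (∀ c ∈ Γ.par f, P c) → P f) (f : E) :
    P f := by
  obtain ⟨rank, hrank⟩ := Γ.wf
  exact (measure rank).wf.induction f fun f ih => step f fun c hc => ih c (hrank f c hc)

variable {Γ}

theorem not_inUp_of_par_eq_some {f c : E} (hc : Γ.par f = some c) : ¬Γ.inUp c f := by
  obtain ⟨rank, hrank⟩ := Γ.wf
  have rank_anti : ∀ {a d}, Γ.inUp a d → rank d ≤ rank a := fun h => by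
    induction h with
    | refl => rfl
    | tail _ hd ih => exact (hrank _ _ hd).le.trans ih
  exact fun hcf => (rank_anti hcf).not_gt (hrank f c hc)

theorem exists_par_eq_some_and_inUp {f h : E} (hfh : Γ.inUp f h) (hne : f ≠ h) :
    ∃ c, Γ.par f = some c ∧ Γ.inUp c h := by
  simpa [hne] using Γ.inUp_iff.1 hfh

theorem inUp_and_ne_iff {f h : E} : Γ.inUp f h ∧ h ≠ f ↔ ∃ c ∈ Γ.par f, Γ.inUp c h := by
  rw [Γ.inUp_iff]
  constructor
  · rintro ⟨rfl | hc, hne⟩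
    exacts [absurd rfl hne, hc]
  · rintro ⟨c, hc, hch⟩
    exact ⟨Or.inr ⟨c, hc, hch⟩, by rintro rfl; exact not_inUp_of_par_eq_some hc hch⟩

theorem inUp_total_of_inUp {a f g : E} (hf : Γ.inUp a f) (hg : Γ.inUp a g) :
    Γ.inUp f g ∨ Γ.inUp g f := by
  induction hg using Relation.ReflTransGen.head_induction_on with
  | refl => exact Or.inr hf
  | head hac _ ih =>
    rcases Γ.inUp_iff.1 hf with rfl | ⟨c', hc', hf'⟩
    · exact Or.inl (.head hac ‹_›)
    · exact ih (Option.some_inj.1 (hac.symm.trans hc') ▸ hf')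

theorem not_isHanging_of_inUp {b e : E} (h : Γ.inUp b e) (hne : b ≠ e) : ¬Γ.IsHanging e := by
  obtain ⟨c, -, hc⟩ := (Relation.ReflTransGen.cases_tail h).resolve_left hne.symm
  exact fun he => he c hc

@[simp]
theorem mem_up [Fintype E] {f g : E} : g ∈ Γ.up f ↔ Γ.inUp f g := by
  classical
  simp [up]

theorem inUp_congr {Γ' : EdgeRootedTree E} {f : E}
    (hpar : ∀ g, Γ.inUp f g → Γ'.par g = Γ.par g) (h : E) : Γ'.inUp f h ↔ Γ.inUp f h := by
  induction f using Γ.par_induction with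
  | step f ih =>
    rw [Γ'.inUp_iff, Γ.inUp_iff, hpar f .refl]
    exact or_congr_right <| exists_congr fun c => and_congr_right fun hc =>
      ih c hc fun g hg => hpar g (.head hc hg)

theorem two_mul_P2_sub_two_mul_P2 [Fintype E] {Γ' : EdgeRootedTree E}
    (h : Γ'.hanging = Γ.hanging) (t : E → ℝ) :
    2 * P2 Γ t - 2 * P2 Γ' t =
      ∑ f, ∑ g ∈ Γ.up f, t f * t g - ∑ f, ∑ g ∈ Γ'.up f, t f * t g := by
  rw [P2, P2, h]
  ring

end Tree

section T1

open scoped Classical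

variable {Γ Γ' : EdgeRootedTree E} {e b : E}

theorem T1par_apply_b : Γ.T1par e b b = some e := by
  simp [T1par]

theorem T1par_apply_e_of_par_b_eq (hne : b ≠ e) (hbe : Γ.par b = some e) :
    Γ.T1par e b e = Γ.par e := by
  simp [T1par, hne.symm, hbe]

theorem T1par_apply_e_of_par_b_ne (hne : b ≠ e) (hbe : Γ.par b ≠ some e) :
    Γ.T1par e b e = Γ.par b := by
  simp [T1par, hne.symm, hbe]

theorem T1par_apply_of_par_eq {f : E} (hfb : f ≠ b) (hfe : f ≠ e) (hf : Γ.par f = some e) :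
    Γ.T1par e b f = Γ.par e := by
  simp [T1par, hfb, hfe, hf]

theorem T1par_apply_of_par_ne {f : E} (hfb : f ≠ b) (hfe : f ≠ e) (hf : Γ.par f ≠ some e) :
    Γ.T1par e b f = Γ.par f := by
  simp [T1par, hfb, hfe, hf]

theorem T1par_apply_eq_some_or_exists_eq_par (f : E) :
    Γ.T1par e b f = some e ∨ ∃ g, Γ.T1par e b f = Γ.par g := by
  unfold T1par
  split_ifs <;> simp

theorem exists_T1par_eq_par (hdesc : Γ.inUp b e) (hne : b ≠ e) {g : E}
    (hg : Γ.par g ≠ some e) : ∃ g', Γ.T1par e b g' = Γ.par g := by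
  by_cases hge : g = e
  · subst g
    by_cases hbe : Γ.par b = some e
    · exact ⟨e, T1par_apply_e_of_par_b_eq hne hbe⟩
    · obtain ⟨c, -, hc⟩ := (Relation.ReflTransGen.cases_tail hdesc).resolve_left hne.symm
      have hcb : c ≠ b := by rintro rfl; exact hbe hc
      have hce : c ≠ e := by rintro rfl; exact not_inUp_of_par_eq_some hc .refl
      exact ⟨c, T1par_apply_of_par_eq hcb hce hc⟩
  by_cases hgb : g = b
  · subst g
    exact ⟨e, T1par_apply_e_of_par_b_ne hne hg⟩
  · exact ⟨g, T1par_apply_of_par_ne hgb hge hg⟩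

theorem hanging_T1 [Fintype E] (hΓ' : Γ'.par = Γ.T1par e b) (hdesc : Γ.inUp b e) (hne : b ≠ e) :
    Γ'.hanging = Γ.hanging := by
  ext f
  simp only [hanging, Finset.mem_filter, Finset.mem_univ, true_and, IsHanging, hΓ']
  constructor
  · intro hf g hgf
    have hfe : f ≠ e := by rintro rfl; exact hf b T1par_apply_b
    obtain ⟨g', hg'⟩ := exists_T1par_eq_par hdesc hne (hgf.trans_ne (by simpa using hfe))
    exact hf g' (hg'.trans hgf)
  · intro hf g hgf
    have hfe : f ≠ e := by rintro rfl; exact not_isHanging_of_inUp hdesc hne hf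
    rcases T1par_apply_eq_some_or_exists_eq_par (Γ := Γ) (e := e) (b := b) g with hge | ⟨g', hg'⟩
    · exact hfe (Option.some_inj.1 (hgf.symm.trans hge))
    · exact hf g' (hg'.symm.trans hgf)

theorem inUp_T1_iff_of_not_inUp (hΓ' : Γ'.par = Γ.T1par e b) (hdesc : Γ.inUp b e) {f : E}
    (hf : ¬Γ.inUp f e) (h : E) : Γ'.inUp f h ↔ Γ.inUp f h := by
  refine inUp_congr (fun g hfg => ?_) h
  have hg : ¬Γ.inUp g e := fun hge => hf (hfg.trans hge)
  rw [hΓ', T1par_apply_of_par_ne (by rintro rfl; exact hg hdesc) (by rintro rfl; exact hg .refl)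
    fun hge => hg (.single hge)]

theorem exists_mem_par_inUp_T1_iff (hΓ' : Γ'.par = Γ.T1par e b) (hdesc : Γ.inUp b e) (h : E) :
    (∃ c ∈ Γ.par e, Γ'.inUp c h) ↔ Γ.inUp e h ∧ h ≠ e := by
  rw [inUp_and_ne_iff]
  exact exists_congr fun c => and_congr_right fun hc =>
    inUp_T1_iff_of_not_inUp hΓ' hdesc (not_inUp_of_par_eq_some hc) h

theorem inUp_T1_iff_of_inUp (hΓ' : Γ'.par = Γ.T1par e b) (hb : Γ.IsHanging b)
    (hdesc : Γ.inUp b e) {f : E} (hfe : Γ.inUp f e) (hfe' : f ≠ e) (hfb : f ≠ b) (h : E) :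
    Γ'.inUp f h ↔ Γ.inUp f h ∧ h ≠ e := by
  induction f using Γ.par_induction with
  | step f ih =>
    obtain ⟨c, hc, hce⟩ := exists_par_eq_some_and_inUp hfe hfe'
    have hfh : f = h → h ≠ e := fun hfh => hfh ▸ hfe'
    rw [Γ.inUp_iff_of_par_eq_some hc]
    by_cases hce' : c = e
    · subst c
      have hpar : Γ'.par f = Γ.par e := by rw [hΓ', T1par_apply_of_par_eq hfb hfe' hc]
      rw [Γ'.inUp_iff, hpar, exists_mem_par_inUp_T1_iff hΓ' hdesc]
      tauto
    · have hpar : Γ'.par f = some c := by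
        rw [hΓ', T1par_apply_of_par_ne hfb hfe' (by simpa [hc] using hce'), hc]
      have hcb : c ≠ b := by rintro rfl; exact hb f hc
      rw [Γ'.inUp_iff_of_par_eq_some hpar, ih c hc hce hce' hcb]
      tauto

theorem up_T1_of_not_inUp [Fintype E] (hΓ' : Γ'.par = Γ.T1par e b) (hdesc : Γ.inUp b e)
    {f : E} (hf : ¬Γ.inUp f e) : Γ'.up f = Γ.up f := by
  ext h
  simp only [mem_up, inUp_T1_iff_of_not_inUp hΓ' hdesc hf]

theorem up_T1_of_inUp [Fintype E] (hΓ' : Γ'.par = Γ.T1par e b) (hb : Γ.IsHanging b)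
    (hdesc : Γ.inUp b e) {f : E} (hfe : Γ.inUp f e) (hfe' : f ≠ e) (hfb : f ≠ b) :
    Γ'.up f = (Γ.up f).erase e := by
  ext h
  simp only [mem_up, Finset.mem_erase, inUp_T1_iff_of_inUp hΓ' hb hdesc hfe hfe' hfb, and_comm]

theorem up_T1_e [Fintype E] (hΓ' : Γ'.par = Γ.T1par e b) (hb : Γ.IsHanging b)
    (hdesc : Γ.inUp b e) (hne : b ≠ e) :
    Γ'.up e = Γ.up e ∪ (Γ.up b \ insert b (Γ.up e)) := by
  ext h
  obtain ⟨q, hq, hqe⟩ := exists_par_eq_some_and_inUp hdesc hne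
  simp only [Finset.mem_union, Finset.mem_sdiff, Finset.mem_insert, mem_up,
    Γ.inUp_iff_of_par_eq_some hq]
  by_cases hqe' : q = e
  · subst q
    have hpar : Γ'.par e = Γ.par e := by rw [hΓ', T1par_apply_e_of_par_b_eq hne hq]
    rw [Γ'.inUp_iff, hpar, exists_mem_par_inUp_T1_iff hΓ' hdesc]
    have hrefl : e = h → Γ.inUp e h := by rintro rfl; exact .refl
    tauto
  · have hpar : Γ'.par e = some q := by
      rw [hΓ', T1par_apply_e_of_par_b_ne hne (by simpa [hq] using hqe'), hq]
    have hqb : q ≠ b := by rintro rfl; exact not_inUp_of_par_eq_some hq .refl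
    rw [Γ'.inUp_iff_of_par_eq_some hpar, inUp_T1_iff_of_inUp hΓ' hb hdesc hqe hqe' hqb]
    have hqb' : ¬Γ.inUp q b := not_inUp_of_par_eq_some hq
    have hqh : Γ.inUp e h → Γ.inUp q h := hqe.trans
    have hrefl : e = h → Γ.inUp e h := by rintro rfl; exact .refl
    by_cases hhb : h = b
    · subst h
      tauto
    · tauto

theorem up_T1_b [Fintype E] (hΓ' : Γ'.par = Γ.T1par e b) (hb : Γ.IsHanging b)
    (hdesc : Γ.inUp b e) (hne : b ≠ e) : Γ'.up b = Γ.up b := by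
  ext h
  have hpar : Γ'.par b = some e := by rw [hΓ', T1par_apply_b]
  rw [mem_up, mem_up, Γ'.inUp_iff_of_par_eq_some hpar, ← mem_up (Γ := Γ'),
    up_T1_e hΓ' hb hdesc hne]
  simp only [Finset.mem_union, Finset.mem_sdiff, Finset.mem_insert, mem_up]
  have hrefl : b = h → Γ.inUp b h := by rintro rfl; exact .refl
  have heh : Γ.inUp e h → Γ.inUp b h := hdesc.trans
  tauto

theorem up_sdiff_insert_up_subset [Fintype E] (hdesc : Γ.inUp b e) :
    Γ.up b \ insert b (Γ.up e) ⊆ Finset.univ.filter fun f => Γ.inUp f e ∧ f ≠ e ∧ f ≠ b := by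
  intro f hf
  simp only [Finset.mem_sdiff, Finset.mem_insert, mem_up, not_or] at hf
  obtain ⟨hbf, hfb, hef⟩ := hf
  have hfe : Γ.inUp f e := (inUp_total_of_inUp hbf hdesc).resolve_right hef
  simpa [hfb, hfe] using fun hfe' : f = e => hef (hfe' ▸ .refl)

theorem sum_up_sub_sum_up_T1 [Fintype E] (hΓ' : Γ'.par = Γ.T1par e b) (hb : Γ.IsHanging b)
    (hdesc : Γ.inUp b e) (hne : b ≠ e) (t : E → ℝ) :
    ∑ f, ∑ g ∈ Γ.up f, t f * t g - ∑ f, ∑ g ∈ Γ'.up f, t f * t g =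
      t e * ∑ f ∈ (Finset.univ.filter fun f => Γ.inUp f e ∧ f ≠ e ∧ f ≠ b) \
          (Γ.up b \ insert b (Γ.up e)), t f := by
  set D := Finset.univ.filter fun f => Γ.inUp f e ∧ f ≠ e ∧ f ≠ b
  set L := Γ.up b \ insert b (Γ.up e)
  have mem_D {f : E} : f ∈ D ↔ Γ.inUp f e ∧ f ≠ e ∧ f ≠ b := by simp [D]
  have hLD : L ⊆ D := up_sdiff_insert_up_subset hdesc
  have hdiff (f : E) : ∑ g ∈ Γ.up f, t f * t g - ∑ g ∈ Γ'.up f, t f * t g =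
      (if f ∈ D then t f * t e else 0) - if f = e then t e * ∑ g ∈ L, t g else 0 := by
    by_cases hfe : f = e
    · subst f
      have hdisj : Disjoint (Γ.up e) L := Finset.disjoint_left.2 fun _ hg hgL =>
        (Finset.mem_sdiff.1 hgL).2 (Finset.mem_insert_of_mem hg)
      rw [up_T1_e hΓ' hb hdesc hne, Finset.sum_union hdisj, if_neg (by simp [mem_D]),
        if_pos rfl, Finset.mul_sum]
      ring
    rw [if_neg hfe, sub_zero]
    by_cases hfD : f ∈ D
    · obtain ⟨hfe', -, hfb⟩ := mem_D.1 hfD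
      rw [if_pos hfD, up_T1_of_inUp hΓ' hb hdesc hfe' hfe hfb,
        Finset.sum_erase_eq_sub (mem_up.2 hfe'), sub_sub_cancel]
    · have hup : Γ'.up f = Γ.up f := by
        by_cases hf : Γ.inUp f e
        · obtain rfl : f = b := by by_contra hfb; exact hfD (mem_D.2 ⟨hf, hfe, hfb⟩)
          exact up_T1_b hΓ' hb hdesc hne
        · exact up_T1_of_not_inUp hΓ' hdesc hf
      rw [if_neg hfD, hup, sub_self]
  rw [← Finset.sum_sub_distrib, Finset.sum_congr rfl fun f _ => hdiff f, Finset.sum_sub_distrib,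
    Finset.sum_ite_mem, Finset.univ_inter, Finset.sum_ite_eq', if_pos (Finset.mem_univ _),
    ← Finset.sum_mul, ← Finset.sum_sdiff hLD]
  ring

end T1

end EdgeRootedTree

open EdgeRootedTree in
open scoped Classical in
theorem T1_P2_difference_general
    {E : Type*} [Fintype E] (Γ Γ' : EdgeRootedTree E) (t : E → ℝ)
    (e b : E)
    (hb : Γ.IsHanging b)
    (hdesc : Γ.inUp b e) (hne : b ≠ e)
    (hΓ' : Γ'.par = T1par Γ e b) :
    2 * P2 Γ t - 2 * P2 Γ' t =
      t e * ∑ f ∈ (Finset.univ.filter fun f => Γ.inUp f e ∧ f ≠ e ∧ f ≠ b) \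
          (Γ.up b \ insert b (Γ.up e)), t f := by
  rw [two_mul_P2_sub_two_mul_P2 (hanging_T1 hΓ' hdesc hne),
    sum_up_sub_sum_up_T1 hΓ' hb hdesc hne]

open EdgeRootedTree in
open scoped Classical in
/-- Let `e` be a non-hanging edge of the rooted tree `Γ` and `b` a
hanging edge which is a proper descendant of `e`.  With
`l = up(b) \ ({b} ∪ up(e))` and `D` the set of proper descendants of `e` other than
`b`, if `Γ'` is obtained from `Γ` by the transformation T1 (keeping the edge lengths),
then `2 P₂(Γ,t) - 2 P₂(Γ',t) = t_e ⬝ Σ_{f ∈ D \ l} t_f`. -/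
theorem T1_P2_difference
    {E : Type*} [Fintype E] (Γ Γ' : EdgeRootedTree E) (t : E → ℝ)
    (ht : ∀ x, 0 < t x) (e b : E)
    (he : ¬ Γ.IsHanging e) (hb : Γ.IsHanging b)
    (hdesc : Γ.inUp b e) (hne : b ≠ e)
    (hΓ' : Γ'.par = T1par Γ e b) :
    2 * P2 Γ t - 2 * P2 Γ' t =
      t e * ∑ f ∈ (Finset.univ.filter fun f => Γ.inUp f e ∧ f ≠ e ∧ f ≠ b) \
          (Γ.up b \ insert b (Γ.up e)), t f :=
  T1_P2_difference_general Γ Γ' t e b hb hdesc hne hΓ'
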